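/- Suppose gcd(m, l+1) = d > 1. If (w_1,…,w_l) and (w̃_1,…,w̃_l) produce the same characteristic polynomial D = D̃ and moreover w_j = w̃_j for j = m−d+1,…,m−1, then w_j = w̃_j for all j = 1,…,l. -/

import Mathlib

open Polynomial

noncomputable def psi : ℕ → Polynomial ℂ
  | 0 => 0
  | 1 => 1
  | (n + 2) => Polynomial.X * psi (n + 1) - psi n

noncomputable def Dpoly (l m : ℕ) (w : ℕ → ℂ) : Polynomial ℂ :=
  psi m * (psi (l - m + 2) +
      ∑ j ∈ Finset.Icc 1 (l - m + 1), Polynomial.C (w (l + 1 - j)) * psi j) +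
  psi (l - m + 1) *
    (-psi (m - 1) + ∑ j ∈ Finset.Icc 1 (m - 1), Polynomial.C (w j) * psi j)

/-!
Writing `A` and `B` for the `ψ`-expansions of the differences `w - w̃` (read backwards from `l`,
resp. forwards from `1`), the difference of the two characteristic polynomials is
`ψ_m A + ψ_{l-m+1} B`, and `deg A < l - m + 1`, `deg B < m - 1`.
The `ψ_n` form a strong divisibility sequence: `ψ_m = ψ_d P`, `ψ_{l-m+1} = ψ_d Q` with `P`, `Q`
coprime, where `d = gcd(m, l-m+1) = gcd(m, l+1)`. So `P ∣ B`; the hypothesis cuts `B` down to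
`ψ_1, …, ψ_{m-d}`, hence `deg B < m - d = deg P`, which forces `B = 0` and then `A = 0`.
As `ψ_j` is monic of degree `j - 1`, the `ψ_j` are linearly independent and all differences vanish.
-/

open Finset

lemma psi_add_two (n : ℕ) : psi (n + 2) = X * psi (n + 1) - psi n := rfl

lemma psi_succ_monic_and_natDegree (n : ℕ) :
    (psi (n + 1)).Monic ∧ (psi (n + 1)).natDegree = n := by
  induction n using Nat.twoStepInduction with
  | zero => exact ⟨monic_one, natDegree_one⟩
  | one => simp [psi]
  | more n ih₀ ih₁ =>
    obtain ⟨hmon, hdeg⟩ := ih₁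
    have hXmon : (X * psi (n + 2)).Monic := monic_X.mul hmon
    have hXdeg : (X * psi (n + 2)).natDegree = n + 2 := by
      rw [natDegree_X_mul hmon.ne_zero, hdeg]
    have hlt : (psi (n + 1)).natDegree < (X * psi (n + 2)).natDegree := by
      rw [hXdeg, ih₀.2]; omega
    rw [psi_add_two]
    exact ⟨hXmon.sub_of_left (degree_lt_degree hlt),
      by rw [natDegree_sub_eq_left_of_natDegree_lt hlt, hXdeg]⟩

lemma psi_monic {n : ℕ} (hn : n ≠ 0) : (psi n).Monic := by
  obtain ⟨k, rfl⟩ := Nat.exists_eq_succ_of_ne_zero hn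
  exact (psi_succ_monic_and_natDegree k).1

lemma psi_ne_zero {n : ℕ} (hn : n ≠ 0) : psi n ≠ 0 := (psi_monic hn).ne_zero

lemma natDegree_psi (n : ℕ) : (psi n).natDegree = n - 1 := by
  cases n with
  | zero => simp [psi]
  | succ k => exact (psi_succ_monic_and_natDegree k).2

lemma psi_add_add_one (a b : ℕ) :
    psi (a + b + 1) = psi (a + 1) * psi (b + 1) - psi a * psi b := by
  induction b using Nat.twoStepInduction with
  | zero => simp [psi]
  | one => simp [psi, mul_comm]
  | more b ih₀ ih₁ =>
    rw [show a + (b + 2) + 1 = a + b + 1 + 2 by omega, psi_add_two,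
      show a + b + 1 + 1 = a + (b + 1) + 1 by omega, ih₁, ih₀, psi_add_two (b + 1),
      psi_add_two b]
    ring

lemma isCoprime_psi_succ (n : ℕ) : IsCoprime (psi n) (psi (n + 1)) := by
  induction n with
  | zero => simp [psi, isCoprime_one_right]
  | succ k ih =>
    rw [show k + 1 + 1 = k + 2 from rfl, psi_add_two, mul_comm, sub_eq_neg_add]
    exact ih.symm.neg_right.add_mul_left_right X

lemma psi_dvd_psi_mul_add_sub {a : ℕ} (ha : a ≠ 0) (q r : ℕ) :
    psi a ∣ psi (a * q + r) - (-psi (a - 1)) ^ q * psi r := by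
  induction q with
  | zero => simp
  | succ q ih =>
    have hadd : psi (a * (q + 1) + r) =
        psi (a * q + r + 1) * psi a - psi (a * q + r) * psi (a - 1) := by
      have := psi_add_add_one (a * q + r) (a - 1)
      rwa [show a * q + r + (a - 1) + 1 = a * (q + 1) + r by rw [mul_add]; omega,
        Nat.sub_add_cancel (Nat.one_le_iff_ne_zero.2 ha)] at this
    rw [hadd, show psi (a * q + r + 1) * psi a - psi (a * q + r) * psi (a - 1) -
        (-psi (a - 1)) ^ (q + 1) * psi r = psi a * psi (a * q + r + 1) -
        psi (a - 1) * (psi (a * q + r) - (-psi (a - 1)) ^ q * psi r) by ring]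
    exact (dvd_mul_right _ _).sub (ih.mul_left _)

lemma exists_psi_eq_psi_gcd_mul (a b : ℕ) : ∃ P Q : ℂ[X],
    psi a = psi (Nat.gcd a b) * P ∧ psi b = psi (Nat.gcd a b) * Q ∧ IsCoprime P Q := by
  induction a, b using Nat.gcd.induction with
  | H0 b => exact ⟨0, 1, by simp [psi], by simp, isCoprime_zero_left.2 isUnit_one⟩
  | H1 a b ha ih =>
    obtain ⟨P, Q, hP, hQ, hPQ⟩ := ih
    obtain ⟨M, hM⟩ := psi_dvd_psi_mul_add_sub ha.ne' (b / a) (b % a)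
    rw [Nat.div_add_mod, sub_eq_iff_eq_add'] at hM
    rw [← Nat.gcd_rec] at hP hQ
    refine ⟨Q, (-psi (a - 1)) ^ (b / a) * P + Q * M, hQ, by rw [hM, hP, hQ]; ring, ?_⟩
    have hQa : IsCoprime Q (psi (a - 1)) := by
      refine IsCoprime.of_isCoprime_of_dvd_left ?_ (Dvd.intro_left _ hQ.symm)
      simpa [Nat.sub_add_cancel ha] using (isCoprime_psi_succ (a - 1)).symm
    exact (hQa.neg_right.pow_right.mul_right hPQ.symm).add_mul_left_right M

noncomputable def psiComb (N : ℕ) (c : ℕ → ℂ) : ℂ[X] := ∑ j ∈ Icc 1 N, C (c j) * psi j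

lemma psiComb_succ (N : ℕ) (c : ℕ → ℂ) :
    psiComb (N + 1) c = psiComb N c + C (c (N + 1)) * psi (N + 1) :=
  sum_Icc_succ_top (by omega) _

lemma degree_psiComb_lt (N : ℕ) (c : ℕ → ℂ) : (psiComb N c).degree < N := by
  rw [← mem_degreeLT]
  refine Submodule.sum_mem _ fun j hj => ?_
  rw [← smul_eq_C_mul]
  refine Submodule.smul_mem _ _ (mem_degreeLT.2 ((degree_le_natDegree).trans_lt ?_))
  rw [natDegree_psi, Nat.cast_lt]
  grind

lemma psiComb_eq_zero_iff (N : ℕ) (c : ℕ → ℂ) :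
    psiComb N c = 0 ↔ ∀ j ∈ Icc 1 N, c j = 0 := by
  refine ⟨fun h => ?_, fun h => sum_eq_zero fun j hj => by simp [h j hj]⟩
  induction N with
  | zero => simp
  | succ N ih =>
    rw [psiComb_succ] at h
    have htop : c (N + 1) = 0 := by
      have hlead : (psi (N + 1)).coeff N = 1 := by
        simpa [natDegree_psi] using (psi_monic N.succ_ne_zero).coeff_natDegree
      simpa [coeff_eq_zero_of_degree_lt (degree_psiComb_lt N c), coeff_C_mul, hlead] using
        congrArg (coeff · N) h
    rw [htop, map_zero, zero_mul, add_zero] at h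
    intro j hj
    rcases (mem_Icc.1 hj).2.lt_or_eq with hlt | rfl
    · exact ih h j (mem_Icc.2 ⟨(mem_Icc.1 hj).1, by omega⟩)
    · exact htop

lemma psiComb_eq_of_eq_zero {M N : ℕ} (hNM : N ≤ M) {c : ℕ → ℂ}
    (hc : ∀ j, N < j → j ≤ M → c j = 0) : psiComb M c = psiComb N c := by
  refine (sum_subset (Icc_subset_Icc_right hNM) fun j hjM hjN => ?_).symm
  simp only [mem_Icc, not_and, not_le] at hjM hjN
  simp [hc j (hjN hjM.1) hjM.2]

lemma Dpoly_sub (l m : ℕ) (w wt : ℕ → ℂ) :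
    Dpoly l m w - Dpoly l m wt =
      psi m * psiComb (l - m + 1) (fun j => w (l + 1 - j) - wt (l + 1 - j)) +
        psi (l - m + 1) * psiComb (m - 1) (w - wt) := by
  simp only [Dpoly, psiComb, Pi.sub_apply, map_sub, sub_mul, sum_sub_distrib]
  ring

lemma eq_zero_of_isCoprime_of_mul_add_mul_eq_zero {R : Type*} [CommRing R] [IsDomain R]
    {P Q A B : R[X]} (hPQ : IsCoprime P Q) (h : P * A + Q * B = 0)
    (hB : B.degree < P.degree) : A = 0 ∧ B = 0 := by
  have hP : P ≠ 0 := ne_zero_of_degree_gt hB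
  have hB0 : B = 0 :=
    eq_zero_of_dvd_of_degree_lt (hPQ.dvd_of_dvd_mul_left ⟨-A, by linear_combination h⟩) hB
  subst hB0
  exact ⟨(mul_eq_zero.1 (by simpa using h)).resolve_left hP, rfl⟩

lemma eq_zero_of_psi_mul_add_psi_mul_eq_zero {m k : ℕ} (hm : m ≠ 0) {A B : ℂ[X]}
    (h : psi m * A + psi k * B = 0) (hB : B.degree < (m - Nat.gcd m k : ℕ)) :
    A = 0 ∧ B = 0 := by
  obtain ⟨P, Q, hP, hQ, hPQ⟩ := exists_psi_eq_psi_gcd_mul m k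
  have hg : psi (Nat.gcd m k) ≠ 0 := psi_ne_zero (Nat.gcd_ne_zero_left hm)
  have hPdeg : P.degree = (m - Nat.gcd m k : ℕ) := by
    have hP0 : P ≠ 0 := by rintro rfl; exact psi_ne_zero hm (by simpa using hP)
    have hdeg := congrArg natDegree hP
    rw [natDegree_mul hg hP0, natDegree_psi, natDegree_psi] at hdeg
    have hgm := Nat.le_of_dvd (Nat.pos_of_ne_zero hm) (Nat.gcd_dvd_left m k)
    have hg0 := Nat.gcd_pos_of_pos_left k (Nat.pos_of_ne_zero hm)
    rw [degree_eq_natDegree hP0, Nat.cast_inj]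
    omega
  refine eq_zero_of_isCoprime_of_mul_add_mul_eq_zero hPQ ?_ (hPdeg ▸ hB)
  refine (mul_eq_zero.1 ?_).resolve_left hg
  rw [← h, hP, hQ]; ring

theorem uniqueness_degenerate_general (l m d : ℕ) (hm : 1 ≤ m) (hml : m ≤ l)
    (hgcd : Nat.gcd m (l + 1) = d) (w wt : ℕ → ℂ)
    (hD : Dpoly l m w = Dpoly l m wt)
    (hw : ∀ j, m - d + 1 ≤ j → j ≤ m - 1 → w j = wt j) :
    ∀ j, 1 ≤ j → j ≤ l → w j = wt j := by
  have hgcd' : Nat.gcd m (l - m + 1) = d := by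
    rwa [show l + 1 = m + (l - m + 1) by omega, Nat.gcd_self_add_right] at hgcd
  have hd : 0 < d := hgcd ▸ Nat.gcd_pos_of_pos_left _ hm
  have hdm : d ≤ m := hgcd ▸ Nat.le_of_dvd hm (Nat.gcd_dvd_left _ _)
  have hsub := Dpoly_sub l m w wt
  rw [hD, sub_self, psiComb_eq_of_eq_zero (N := m - d) (c := w - wt) (by omega)
    fun j hj hj' => sub_eq_zero.2 (hw j hj hj')] at hsub
  obtain ⟨hA, hB⟩ := eq_zero_of_psi_mul_add_psi_mul_eq_zero (by omega) hsub.symm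
    (hgcd' ▸ degree_psiComb_lt _ _)
  rw [psiComb_eq_zero_iff] at hA hB
  intro j hj hjl
  rcases lt_or_ge j m with hjm | hjm
  · rcases le_or_gt j (m - d) with hjd | hjd
    · exact sub_eq_zero.1 (hB j (mem_Icc.2 ⟨hj, hjd⟩))
    · exact hw j hjd (by omega)
  · refine sub_eq_zero.1 ?_
    simpa [Nat.sub_sub_self (show j ≤ l + 1 by omega)] using
      hA (l + 1 - j) (mem_Icc.2 ⟨by omega, by omega⟩)

theorem uniqueness_degenerate (l m d : ℕ) (hm : 1 ≤ m) (hml : m ≤ l)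
    (hgcd : Nat.gcd m (l + 1) = d) (hd : 1 < d) (w wt : ℕ → ℂ)
    (hD : Dpoly l m w = Dpoly l m wt)
    (hw : ∀ j, m - d + 1 ≤ j → j ≤ m - 1 → w j = wt j) :
    ∀ j, 1 ≤ j → j ≤ l → w j = wt j :=
  uniqueness_degenerate_general l m d hm hml hgcd w wt hD hw
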